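/- Fix K > 0 and set T := K/Lip(h)². If α ≥ K‖α h(w₀) − y⋆‖/(r · Lip(h)), then (α · Lip(h)/‖α h(w₀) − y⋆‖) · ‖w_α(T) − w̄_α(T)‖ ≤ (K²/α) · (Lip(Dh)/Lip(h)²) · ‖α h(w₀) − y⋆‖ · (2 + 4K/3). -/

import Mathlib

/-!
Write `g = α h(w) - y⋆` for the residual. Along the gradient flow `w' = -α⁻¹ Dh(w)† g` and
`g' = -Dh(w) Dh(w)† g`, so `‖g‖` never exceeds `ρ = ‖α h(w₀) - y⋆‖` and `w` moves at speed at most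
`Lip(h) ρ / α`; the lower bound on `α` keeps it in the ball up to time `T`. There
`‖Dh(w(t)) - Dh(w₀)‖ ≤ Lip(Dh) Lip(h) ρ t / α`. The difference of the two residuals solves a
dissipative linear equation with a forcing term of size `O(t)`, so an energy estimate bounds it by
`O(t²)`; integrating the difference of the two velocities then bounds `‖w - w̄‖` by
`O(t² + t³)`, which at `t = T` is a quarter of the claimed bound.
-/

open scoped RealInnerProductSpace
open Set Metric ContinuousLinearMap

section Comparison

variable {H : Type*} [NormedAddCommGroup H] [InnerProductSpace ℝ H] {a b : ℝ}

theorem norm_le_of_inner_deriv_right_le {u u' : ℝ → H} {B B' : ℝ → ℝ}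
    (hu : ContinuousOn u (Icc a b)) (hu' : ∀ x ∈ Ico a b, HasDerivWithinAt u (u' x) (Ici x) x)
    (hB : ∀ x, HasDerivAt B (B' x) x) (hB₀ : ∀ x ∈ Icc a b, 0 ≤ B x) (ha : ‖u a‖ ≤ B a)
    (bound : ∀ x ∈ Ico a b, ⟪u x, u' x⟫ ≤ ‖u x‖ * B' x) :
    ∀ x ∈ Icc a b, ‖u x‖ ≤ B x := by
  -- compare `‖u‖²` with the square of a positive barrier that grows strictly faster than `B`
  have perturbed : ∀ δ > 0, ∀ x ∈ Icc a b, ‖u x‖ ≤ B x + δ * (1 + (x - a)) := by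
    intro δ hδ
    set Bδ : ℝ → ℝ := fun x => B x + δ * (1 + (x - a))
    have hBδ : ∀ x, HasDerivAt Bδ (B' x + δ) x := fun x => by
      have hlin : HasDerivAt (fun x => δ * (1 + (x - a))) δ x := by
        simpa using ((hasDerivAt_id' x).sub_const a).const_add 1 |>.const_mul δ
      exact (hB x).add hlin
    have hpos : ∀ x ∈ Icc a b, 0 < Bδ x := fun x hx => by
      have := hB₀ x hx; have := hx.1; positivity
    have hsq := image_le_of_deriv_right_lt_deriv_boundary (f := fun x => ‖u x‖ ^ 2)
      (B := fun x => Bδ x ^ 2) (hu.norm.pow 2) (fun x hx => (hu' x hx).norm_sq)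
      (by simp only [Bδ]; nlinarith [norm_nonneg (u a)])
      (fun x => (hBδ x).pow 2) fun x hx heq => by
        have hx' : ‖u x‖ = Bδ x := by
          rwa [sq_eq_sq₀ (norm_nonneg _) (hpos x (Ico_subset_Icc_self hx)).le] at heq
        have hbound := bound x hx
        rw [hx'] at hbound
        simp only [Nat.cast_ofNat, Nat.add_one_sub_one, pow_one]
        nlinarith [hpos x (Ico_subset_Icc_self hx)]
    intro x hx
    exact (sq_le_sq₀ (norm_nonneg _) (hpos x hx).le).mp (hsq hx)
  intro x hx
  refine le_of_forall_pos_le_add fun ε hε => ?_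
  have hx₀ : 0 < 1 + (x - a) := by linarith [hx.1]
  simpa [div_mul_cancel₀ _ hx₀.ne'] using perturbed (ε / (1 + (x - a))) (by positivity) x hx

variable {E : Type*} [NormedAddCommGroup E] [InnerProductSpace ℝ E] [CompleteSpace E]
  [CompleteSpace H]

theorem norm_le_of_hasDerivWithinAt_neg_comp_adjoint_sub {u e : ℝ → H} {C : ℝ → E →L[ℝ] H}
    {B B' : ℝ → ℝ} (hu : ContinuousOn u (Icc a b))
    (hu' : ∀ x ∈ Ico a b, HasDerivWithinAt u (-C x (adjoint (C x) (u x)) - e x) (Ici x) x)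
    (hB : ∀ x, HasDerivAt B (B' x) x) (hB₀ : ∀ x ∈ Icc a b, 0 ≤ B x) (ha : ‖u a‖ ≤ B a)
    (he : ∀ x ∈ Ico a b, ‖e x‖ ≤ B' x) :
    ∀ x ∈ Icc a b, ‖u x‖ ≤ B x :=
  norm_le_of_inner_deriv_right_le hu hu' hB hB₀ ha fun x hx => by
    have hdiss : ⟪u x, C x (adjoint (C x) (u x))⟫ = ‖adjoint (C x) (u x)‖ ^ 2 := by
      rw [← adjoint_inner_left, real_inner_self_eq_norm_sq]
    have hcs := neg_le_of_abs_le (abs_real_inner_le_norm (u x) (e x))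
    calc ⟪u x, -C x (adjoint (C x) (u x)) - e x⟫
        = -‖adjoint (C x) (u x)‖ ^ 2 - ⟪u x, e x⟫ := by
          rw [inner_sub_right, inner_neg_right, hdiss]
      _ ≤ ‖u x‖ * ‖e x‖ := by nlinarith [sq_nonneg ‖adjoint (C x) (u x)‖]
      _ ≤ ‖u x‖ * B' x := mul_le_mul_of_nonneg_left (he x hx) (norm_nonneg _)

theorem norm_le_norm_of_hasDerivWithinAt_neg_comp_adjoint {u : ℝ → H} {C : ℝ → E →L[ℝ] H}
    (hu : ContinuousOn u (Icc a b))
    (hu' : ∀ x ∈ Ico a b, HasDerivWithinAt u (-C x (adjoint (C x) (u x))) (Ici x) x) :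
    ∀ x ∈ Icc a b, ‖u x‖ ≤ ‖u a‖ :=
  norm_le_of_hasDerivWithinAt_neg_comp_adjoint_sub (e := 0) (B' := 0) hu
    (by simpa using hu') (fun _ => hasDerivAt_const _ _) (fun _ _ => norm_nonneg _) le_rfl
    (by simp)

end Comparison

theorem norm_image_sub_le_of_norm_deriv_right_le_while_near {F : Type*} [NormedAddCommGroup F]
    [NormedSpace ℝ F] {f f' : ℝ → F} {a b C R : ℝ} (hR : 0 < R)
    (hf : ContinuousOn f (Icc a b)) (hf' : ∀ x ∈ Ico a b, HasDerivWithinAt f (f' x) (Ici x) x)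
    (bound : ∀ x ∈ Ico a b, ‖f x - f a‖ ≤ R → ‖f' x‖ ≤ C) (hCR : C * (b - a) ≤ R) :
    ∀ x ∈ Icc a b, ‖f x - f a‖ ≤ C * (x - a) := by
  suffices trapped : ∀ x ∈ Icc a b, ‖f x - f a‖ ≤ R from
    norm_image_sub_le_of_norm_deriv_right_le_segment hf hf' fun x hx =>
      bound x hx (trapped x (Ico_subset_Icc_self hx))
  -- the bound applies before the first time `τ` at which `‖f - f a‖` reaches `R`, and then
  -- `C * (b - a) ≤ R` leaves no room to exceed `R`
  by_contra! ⟨x₀, hx₀, hx₀R⟩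
  set S := Icc a b ∩ (fun x => ‖f x - f a‖) ⁻¹' Ici R
  have hSclosed : IsClosed S :=
    (hf.sub continuousOn_const).norm.preimage_isClosed_of_isClosed isClosed_Icc isClosed_Ici
  have hx₀S : x₀ ∈ S := ⟨hx₀, le_of_lt hx₀R⟩
  have hSbdd : BddBelow S := ⟨a, fun x hx => hx.1.1⟩
  set τ := sInf S
  obtain ⟨⟨hτa, hτb⟩, hτR⟩ : τ ∈ S := hSclosed.csInf_mem ⟨x₀, hx₀S⟩ hSbdd
  have hτx₀ : τ ≤ x₀ := csInf_le hSbdd hx₀S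
  have before : ∀ x ∈ Ico a τ, ‖f x - f a‖ ≤ R := fun x hx => by
    by_contra! hxR
    exact (csInf_le hSbdd ⟨⟨hx.1, hx.2.le.trans hτb⟩, hxR.le⟩).not_gt hx.2
  have hτ := norm_image_sub_le_of_norm_deriv_right_le_segment (hf.mono (Icc_subset_Icc_right hτb))
    (fun x hx => hf' x ⟨hx.1, hx.2.trans_le hτb⟩)
    (fun x hx => bound x ⟨hx.1, hx.2.trans_le hτb⟩ (before x hx)) τ ⟨hτa, le_rfl⟩
  have hRτ : R ≤ C * (τ - a) := le_trans hτR hτ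
  have hC : 0 < C := by nlinarith
  have hx₀τ : x₀ = τ := le_antisymm (by nlinarith [hx₀.2]) hτx₀
  rw [← hx₀τ] at hτ
  nlinarith [hx₀.2]

theorem norm_fderiv_le_of_lipschitzOn_closedBall {E F : Type*} [NormedAddCommGroup E]
    [NormedSpace ℝ E] [NormedAddCommGroup F] [NormedSpace ℝ F] {f : E → F} {x₀ : E} {r L : ℝ}
    (hr : r ≠ 0) (hL : 0 ≤ L)
    (hf : ∀ u ∈ closedBall x₀ r, ∀ v ∈ closedBall x₀ r, ‖f u - f v‖ ≤ L * ‖u - v‖)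
    (hf' : ContinuousOn (fderiv ℝ f) (closedBall x₀ r)) :
    ∀ u ∈ closedBall x₀ r, ‖fderiv ℝ f u‖ ≤ L := by
  have hball : ∀ u ∈ ball x₀ r, ‖fderiv ℝ f u‖ ≤ L := fun u hu =>
    norm_fderiv_le_of_lip' ℝ hL <| Filter.eventually_of_mem (isOpen_ball.mem_nhds hu)
      fun v hv => hf v (ball_subset_closedBall hv) u (ball_subset_closedBall hu)
  rw [← closure_ball x₀ hr] at hf' ⊢
  exact fun u hu => le_on_closure hball hf'.norm continuousOn_const hu

section GradientFlow

variable {E H : Type*} [NormedAddCommGroup E] [InnerProductSpace ℝ E] [CompleteSpace E]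
  [NormedAddCommGroup H] [InnerProductSpace ℝ H] [CompleteSpace H]

theorem norm_adjoint_apply_le (A : E →L[ℝ] H) (g : H) : ‖adjoint A g‖ ≤ ‖A‖ * ‖g‖ := by
  simpa only [LinearIsometryEquiv.norm_map] using (adjoint A).le_opNorm g

theorem norm_adjoint_sub_adjoint_le (P Q : E →L[ℝ] H) (g g' : H) :
    ‖adjoint P g - adjoint Q g'‖ ≤ ‖P - Q‖ * ‖g‖ + ‖Q‖ * ‖g - g'‖ := by
  have hsplit : adjoint P g - adjoint Q g' = adjoint (P - Q) g + adjoint Q (g - g') := by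
    simp only [map_sub, sub_apply]; abel
  rw [hsplit]
  exact norm_add_le_of_le (norm_adjoint_apply_le _ _) (norm_adjoint_apply_le _ _)

theorem norm_comp_adjoint_sub_comp_adjoint_le (P Q : E →L[ℝ] H) (g : H) :
    ‖P (adjoint P g) - Q (adjoint Q g)‖ ≤ (‖P‖ + ‖Q‖) * ‖P - Q‖ * ‖g‖ := by
  have hsplit :
      P (adjoint P g) - Q (adjoint Q g) = P (adjoint (P - Q) g) + (P - Q) (adjoint Q g) := by
    simp only [map_sub, sub_apply]; abel
  rw [hsplit]
  calc _ ≤ ‖P‖ * (‖P - Q‖ * ‖g‖) + ‖P - Q‖ * (‖Q‖ * ‖g‖) :=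
        norm_add_le_of_le (le_opNorm_of_le _ (norm_adjoint_apply_le _ _))
          (le_opNorm_of_le _ (norm_adjoint_apply_le _ _))
    _ = (‖P‖ + ‖Q‖) * ‖P - Q‖ * ‖g‖ := by ring

theorem hasGradientAt_scaled_sq_loss {f : E → H} {D : E →L[ℝ] H} {u : E} (hf : HasFDerivAt f D u)
    (y : H) {α : ℝ} (hα : α ≠ 0) :
    HasGradientAt (fun v => ‖α • f v - y‖ ^ 2 / 2 / α ^ 2) (α⁻¹ • adjoint D (α • f u - y)) u := by
  have hF : HasFDerivAt (fun v => ‖α • f v - y‖ ^ 2) _ u :=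
    ((hf.const_smul α).sub_const y).norm_sq
  have hdiv : (fun v => ‖α • f v - y‖ ^ 2 / 2 / α ^ 2) =
      fun v => ‖α • f v - y‖ ^ 2 * (2 * α ^ 2)⁻¹ := by
    ext v; ring
  rw [hasGradientAt_iff_hasFDerivAt, hdiv]
  refine (hF.mul_const (2 * α ^ 2)⁻¹).congr_fderiv ?_
  ext v
  simp only [Pi.smul_apply, map_sub, map_smul, comp_smulₛₗ, Real.ringHom_apply, sub_comp, smul_comp,
    smul_apply, sub_apply, comp_apply, coe_innerSL_apply, smul_eq_mul, nsmul_eq_mul,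
    Nat.cast_ofNat, InnerProductSpace.toDual_apply_apply, adjoint_inner_left]
  field_simp

theorem hasDerivAt_of_gradientFlow_scaled_sq_loss {f : E → H} {D : E →L[ℝ] H} {w : ℝ → E} {t α : ℝ}
    {y : H} (hf : HasFDerivAt f D (w t)) (hα : α ≠ 0)
    (hw : HasDerivAt w (-gradient (fun u => ‖α • f u - y‖ ^ 2 / 2 / α ^ 2) (w t)) t) :
    HasDerivAt w (-(α⁻¹ • adjoint D (α • f (w t) - y))) t ∧
      HasDerivAt (fun s => α • f (w s) - y) (-D (adjoint D (α • f (w t) - y))) t := by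
  rw [(hasGradientAt_scaled_sq_loss hf y hα).gradient] at hw
  refine ⟨hw, ?_⟩
  convert ((hf.comp_hasDerivAt t hw).const_smul α).sub_const y using 1
  · rfl
  rw [map_neg, map_smul, smul_neg, smul_smul, mul_inv_cancel₀ hα, one_smul]

variable {w wb : ℝ → E} {g gb : ℝ → H} {α L ρ T : ℝ}

theorem norm_sub_initial_le_of_gradientFlow {J : E → E →L[ℝ] H} {r : ℝ} (hα : 0 < α) (hr : 0 < r)
    (hw : ∀ t, 0 ≤ t → HasDerivAt w (-(α⁻¹ • adjoint (J (w t)) (g t))) t)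
    (hJ : ∀ u ∈ closedBall (w 0) r, ‖J u‖ ≤ L) (hg : ∀ t ∈ Icc 0 T, ‖g t‖ ≤ ρ)
    (hT : L * ρ / α * T ≤ r) :
    ∀ t ∈ Icc 0 T, ‖w t - w 0‖ ≤ L * ρ / α * t := by
  have key := norm_image_sub_le_of_norm_deriv_right_le_while_near hr
    (fun t ht => (hw t ht.1).continuousAt.continuousWithinAt)
    (fun t ht => (hw t ht.1).hasDerivWithinAt) (fun t ht hnear => ?_) (by simpa using hT)
  · simpa using key
  have hJt := hJ (w t) (by rwa [mem_closedBall, dist_eq_norm])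
  rw [norm_neg, norm_smul, norm_inv, Real.norm_of_nonneg hα.le, inv_mul_le_iff₀ hα]
  calc _ ≤ ‖J (w t)‖ * ‖g t‖ := norm_adjoint_apply_le _ _
    _ ≤ L * ρ := mul_le_mul hJt (hg t (Ico_subset_Icc_self ht)) (norm_nonneg _)
        ((norm_nonneg _).trans hJt)
    _ = α * (L * ρ / α) := by field_simp

theorem norm_residual_sub_residual_le {P : ℝ → E →L[ℝ] H} {A : E →L[ℝ] H} {κ : ℝ}
    (hg : ∀ t, 0 ≤ t → HasDerivAt g (-P t (adjoint (P t) (g t))) t)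
    (hgb : ∀ t, 0 ≤ t → HasDerivAt gb (-A (adjoint A (gb t))) t) (h0 : g 0 = gb 0)
    (hP : ∀ t ∈ Icc 0 T, ‖P t‖ ≤ L) (hA : ‖A‖ ≤ L) (hPA : ∀ t ∈ Icc 0 T, ‖P t - A‖ ≤ κ * t)
    (hgρ : ∀ t ∈ Icc 0 T, ‖g t‖ ≤ ρ) (hκ : 0 ≤ κ) :
    ∀ t ∈ Icc 0 T, ‖g t - gb t‖ ≤ L * κ * ρ * t ^ 2 := by
  have hL : 0 ≤ L := (norm_nonneg _).trans hA
  refine norm_le_of_hasDerivWithinAt_neg_comp_adjoint_sub (C := fun _ => A)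
    (e := fun t => P t (adjoint (P t) (g t)) - A (adjoint A (g t)))
    (B' := fun t => 2 * (L * κ * ρ) * t)
    (fun t ht => ((hg t ht.1).sub (hgb t ht.1)).continuousAt.continuousWithinAt)
    (fun t ht => ?_) (fun t => ?_) (fun t ht => ?_) (by simp [h0]) (fun t ht => ?_)
  · convert ((hg t ht.1).sub (hgb t ht.1)).hasDerivWithinAt using 1
    · rfl
    simp only [map_sub]
    abel
  · exact ((hasDerivAt_pow 2 t).const_mul (L * κ * ρ)).congr_deriv (by push_cast; ring)
  · have := (norm_nonneg _).trans (hgρ t ht)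
    have := ht.1
    positivity
  · have ht' := Ico_subset_Icc_self ht
    calc _ ≤ (‖P t‖ + ‖A‖) * ‖P t - A‖ * ‖g t‖ := norm_comp_adjoint_sub_comp_adjoint_le _ _ _
      _ ≤ (L + L) * (κ * t) * ρ := by
          have := hPA t ht'
          gcongr
          exacts [mul_nonneg (by linarith) ((norm_nonneg _).trans this), hP t ht', hgρ t ht']
      _ = 2 * (L * κ * ρ) * t := by ring

theorem norm_gradientFlow_sub_gradientFlow_le {P : ℝ → E →L[ℝ] H} {A : E →L[ℝ] H} {κ M : ℝ}
    (hα : 0 < α)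
    (hw : ∀ t, 0 ≤ t → HasDerivAt w (-(α⁻¹ • adjoint (P t) (g t))) t)
    (hwb : ∀ t, 0 ≤ t → HasDerivAt wb (-(α⁻¹ • adjoint A (gb t))) t) (h0 : w 0 = wb 0)
    (hA : ‖A‖ ≤ L) (hPA : ∀ t ∈ Icc 0 T, ‖P t - A‖ ≤ κ * t) (hgρ : ∀ t ∈ Icc 0 T, ‖g t‖ ≤ ρ)
    (hgap : ∀ t ∈ Icc 0 T, ‖g t - gb t‖ ≤ M * t ^ 2) :
    ∀ t ∈ Icc 0 T, ‖w t - wb t‖ ≤ α⁻¹ * (κ * ρ * t ^ 2 / 2 + L * M * t ^ 3 / 3) := by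
  refine image_norm_le_of_norm_deriv_right_le_deriv_boundary
    (B' := fun t => α⁻¹ * (κ * ρ * t + L * M * t ^ 2))
    (fun t ht => ((hw t ht.1).sub (hwb t ht.1)).continuousAt.continuousWithinAt)
    (fun t ht => ((hw t ht.1).sub (hwb t ht.1)).hasDerivWithinAt) (by simp [h0])
    (fun t => ?_) (fun t ht => ?_)
  · exact ((((hasDerivAt_pow 2 t).const_mul (κ * ρ)).div_const 2).add
      (((hasDerivAt_pow 3 t).const_mul (L * M)).div_const 3) |>.const_mul α⁻¹).congr_deriv
      (by push_cast; ring)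
  · have ht' := Ico_subset_Icc_self ht
    rw [neg_sub_neg, norm_sub_rev, ← smul_sub, norm_smul, norm_inv, Real.norm_of_nonneg hα.le]
    gcongr
    calc _ ≤ ‖P t - A‖ * ‖g t‖ + ‖A‖ * ‖g t - gb t‖ := norm_adjoint_sub_adjoint_le _ _ _ _
      _ ≤ κ * t * ρ + L * (M * t ^ 2) := by
          have := hPA t ht'
          gcongr
          exacts [(norm_nonneg _).trans this, hgρ t ht', (norm_nonneg _).trans hA, hgap t ht']
      _ = κ * ρ * t + L * M * t ^ 2 := by ring

end GradientFlow

/-- **Step 3 of the proof of Theorem 2.2 (parameter comparison, square loss).**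
With the square loss, for `K > 0`, `T := K / Lip(h)²` and
`α ≥ K‖α h(w₀) − y⋆‖/(r Lip(h))`, one has
`(α Lip(h)/‖α h(w₀) − y⋆‖)‖w_α(T) − w̄_α(T)‖ ≤ (K²/α)(Lip(Dh)/Lip(h)²)‖α h(w₀) − y⋆‖(2 + 4K/3)`. -/
theorem lazy_square_loss_param_bound
    {p : ℕ} {H : Type*} [NormedAddCommGroup H] [InnerProductSpace ℝ H] [CompleteSpace H]
    (h : EuclideanSpace ℝ (Fin p) → H) (hdiff : Differentiable ℝ h)
    (ystar : H) (w₀ : EuclideanSpace ℝ (Fin p))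
    (r Lh LDh : ℝ) (hr : 0 < r) (hLh : 0 < Lh) (hLDh : 0 ≤ LDh)
    (hhLip : ∀ u ∈ Metric.closedBall w₀ r, ∀ v ∈ Metric.closedBall w₀ r,
      ‖h u - h v‖ ≤ Lh * ‖u - v‖)
    (hDhLip : ∀ u ∈ Metric.closedBall w₀ r, ∀ v ∈ Metric.closedBall w₀ r,
      ‖fderiv ℝ h u - fderiv ℝ h v‖ ≤ LDh * ‖u - v‖)
    (α : ℝ) (hα : 0 < α)
    (w wb : ℝ → EuclideanSpace ℝ (Fin p))
    (hw0 : w 0 = w₀) (hwb0 : wb 0 = w₀)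
    (hwflow : ∀ t : ℝ, 0 ≤ t → HasDerivAt w
      (-(gradient (fun u => ‖α • h u - ystar‖ ^ 2 / 2 / α ^ 2) (w t))) t)
    (hwbflow : ∀ t : ℝ, 0 ≤ t → HasDerivAt wb
      (-(gradient
          (fun u => ‖α • (h w₀ + fderiv ℝ h w₀ (u - w₀)) - ystar‖ ^ 2 / 2 / α ^ 2) (wb t))) t)
    (K : ℝ) (hK : 0 < K)
    (hαbig : K * ‖α • h w₀ - ystar‖ / (r * Lh) ≤ α) :
    α * Lh / ‖α • h w₀ - ystar‖ * ‖w (K / Lh ^ 2) - wb (K / Lh ^ 2)‖ ≤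
      K ^ 2 / α * (LDh / Lh ^ 2) * ‖α • h w₀ - ystar‖ * (2 + 4 * K / 3) := by
  set ρ := ‖α • h w₀ - ystar‖
  set A := fderiv ℝ h w₀
  set T := K / Lh ^ 2 with hT_def
  have hT_mem : T ∈ Icc 0 T := ⟨by positivity, le_rfl⟩
  have hlin (u) : HasFDerivAt (fun v => h w₀ + A (v - w₀)) A u := by
    simpa using (A.hasFDerivAt.comp u ((hasFDerivAt_id u).sub_const w₀)).const_add (h w₀)
  have hw (t) (ht : 0 ≤ t) := hasDerivAt_of_gradientFlow_scaled_sq_loss (hdiff (w t)).hasFDerivAt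
    hα.ne' (hwflow t ht)
  have hwb (t) (ht : 0 ≤ t) := hasDerivAt_of_gradientFlow_scaled_sq_loss (hlin (wb t)) hα.ne'
    (hwbflow t ht)
  have hJ : ∀ u ∈ closedBall w₀ r, ‖fderiv ℝ h u‖ ≤ Lh :=
    norm_fderiv_le_of_lipschitzOn_closedBall hr.ne' hLh.le hhLip
      (LipschitzOnWith.of_dist_le' (by simpa only [dist_eq_norm] using hDhLip)).continuousOn
  have hres : ∀ t ∈ Icc 0 T, ‖α • h (w t) - ystar‖ ≤ ρ := by
    simpa [hw0] using norm_le_norm_of_hasDerivWithinAt_neg_comp_adjoint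
      (fun t ht => (hw t ht.1).2.continuousAt.continuousWithinAt)
      (fun t ht => (hw t ht.1).2.hasDerivWithinAt)
  have hcT : Lh * ρ / α * T ≤ r := by
    have hKρ : K * ρ ≤ α * (r * Lh) := (div_le_iff₀ (by positivity)).mp hαbig
    calc Lh * ρ / α * T = K * ρ / (α * Lh) := by rw [hT_def]; field_simp
      _ ≤ r := by rw [div_le_iff₀ (by positivity)]; linarith
  have hball :=
    norm_sub_initial_le_of_gradientFlow hα hr (fun t ht => (hw t ht).1) (hw0 ▸ hJ) hres hcT
  have hmem : ∀ t ∈ Icc 0 T, w t ∈ closedBall w₀ r := fun t ht => by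
    rw [mem_closedBall, dist_eq_norm, ← hw0]
    exact (hball t ht).trans ((mul_le_mul_of_nonneg_left ht.2 (by positivity)).trans hcT)
  have hPA : ∀ t ∈ Icc 0 T, ‖fderiv ℝ h (w t) - A‖ ≤ LDh * (Lh * ρ / α) * t := fun t ht => by
    refine (hDhLip _ (hmem t ht) w₀ (mem_closedBall_self hr.le)).trans ?_
    rw [mul_assoc, ← hw0]
    exact mul_le_mul_of_nonneg_left (hball t ht) hLDh
  have hgap := norm_residual_sub_residual_le (fun t ht => (hw t ht).2) (fun t ht => (hwb t ht).2)
    (by simp [hw0, hwb0]) (fun t ht => hJ _ (hmem t ht)) (hJ w₀ (mem_closedBall_self hr.le)) hPA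
    hres (by positivity)
  have hΔ := norm_gradientFlow_sub_gradientFlow_le hα (fun t ht => (hw t ht).1)
    (fun t ht => (hwb t ht).1) (hw0.trans hwb0.symm) (hJ w₀ (mem_closedBall_self hr.le)) hPA hres hgap T hT_mem
  rcases (norm_nonneg _ : 0 ≤ ρ).eq_or_lt with hρ | hρ
  · rw [show ρ = 0 from hρ.symm]
    simp
  calc α * Lh / ρ * ‖w T - wb T‖ ≤ K ^ 2 / α * (LDh / Lh ^ 2) * ρ * (1 / 2 + K / 3) := by
        refine (mul_le_mul_of_nonneg_left hΔ (by positivity)).trans_eq ?_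
        rw [hT_def]
        field_simp
    _ ≤ _ := mul_le_mul_of_nonneg_left (by linarith) (by positivity)
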